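/- arXiv:1604.06015 — 2 statements merged into one kernel-verified Lean document; each statement's English description precedes it below -/
import Mathlib

section
/- Let ν̃ be a positive regular Borel measure on [0,∞) satisfying the Δ₂-condition with constant R, and let q > 0 satisfy 2^q > R. Then for every x > 0, the integral ∫₀^∞ g(r) dν̃(r) is finite, where g(r) = x^{−q} for 0 ≤ r < 1 and g(r) = (2^j + x)^{−q} for r ∈ [2^j, 2^{j+1}), j ∈ ℕ₀. In particular, ∫₀^∞ (r + x)^{−q} dν̃(r) < ∞. -/
open MeasureTheory Set
open scoped ENNReal

/-!
Cover `[0, ∞)` by `[0, 1)` and the dyadic blocks `[2^j, 2^(j+1))`. Iterating the doubling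
condition gives `ν[0, 2^j) ≤ R^j ν[0, 1)`, hence `ν[2^j, 2^(j+1)) ≤ (R - 1) R^j ν[0, 1)`, while
both integrands are at most `2^(-qj)` on the `j`-th block. The resulting series is geometric
with ratio `R / 2^q < 1`.
-/

section Doubling

variable {ν : Measure ℝ} {C : ℝ≥0∞}

lemma measure_Ico_zero_two_pow_le
    (hC : ∀ r : ℝ, 0 < r → ν (Ico 0 (2 * r)) ≤ C * ν (Ico 0 r)) (k : ℕ) :
    ν (Ico 0 (2 ^ k)) ≤ C ^ k * ν (Ico 0 1) := by
  induction k with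
  | zero => simp
  | succ k ih =>
    calc ν (Ico 0 (2 ^ (k + 1))) = ν (Ico 0 (2 * 2 ^ k)) := by rw [pow_succ']
      _ ≤ C * ν (Ico 0 (2 ^ k)) := hC _ (by positivity)
      _ ≤ C * (C ^ k * ν (Ico 0 1)) := by gcongr
      _ = C ^ (k + 1) * ν (Ico 0 1) := by rw [pow_succ', mul_assoc]

lemma measure_Ico_self_two_mul_le {r : ℝ} (hr : 0 ≤ r) (hfin : ν (Ico 0 r) ≠ ⊤)
    (hC : ν (Ico 0 (2 * r)) ≤ C * ν (Ico 0 r)) :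
    ν (Ico r (2 * r)) ≤ (C - 1) * ν (Ico 0 r) := by
  have hsplit : ν (Ico 0 r) + ν (Ico r (2 * r)) = ν (Ico 0 (2 * r)) := by
    rw [← measure_union Ico_disjoint_Ico_same measurableSet_Ico,
      Ico_union_Ico_eq_Ico hr (by linarith)]
  rw [ENNReal.sub_mul fun _ _ ↦ hfin, one_mul]
  exact ENNReal.le_sub_of_add_le_left hfin (hsplit.trans_le hC)

lemma measure_Ico_two_pow_le (hfin : ∀ r : ℝ, 0 < r → ν (Ico 0 r) ≠ ⊤)
    (hC : ∀ r : ℝ, 0 < r → ν (Ico 0 (2 * r)) ≤ C * ν (Ico 0 r)) (j : ℕ) :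
    ν (Ico (2 ^ j) (2 ^ (j + 1))) ≤ (C - 1) * C ^ j * ν (Ico 0 1) := by
  have h2j : (0 : ℝ) < 2 ^ j := by positivity
  rw [pow_succ', mul_assoc]
  exact (measure_Ico_self_two_mul_le h2j.le (hfin _ h2j) (hC _ h2j)).trans
    (by gcongr; exact measure_Ico_zero_two_pow_le hC j)

lemma one_le_of_measure_Ico_two_le (h0 : ν (Ico 0 1) ≠ 0) (hfin : ν (Ico 0 1) ≠ ⊤)
    (hC : ν (Ico 0 2) ≤ C * ν (Ico 0 1)) : 1 ≤ C := by
  have hmono : 1 * ν (Ico 0 1) ≤ C * ν (Ico 0 1) :=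
    (one_mul _).trans_le ((measure_mono (Ico_subset_Ico_right one_le_two)).trans hC)
  exact (ENNReal.mul_le_mul_iff_left h0 hfin).mp hmono

lemma Ici_zero_subset_Ico_union_iUnion_Ico_two_pow :
    Ici (0 : ℝ) ⊆ Ico 0 1 ∪ ⋃ j : ℕ, Ico (2 ^ j) (2 ^ (j + 1)) := by
  intro r (hr : 0 ≤ r)
  rcases lt_or_ge r 1 with hr1 | hr1
  · exact Or.inl ⟨hr, hr1⟩
  · obtain ⟨j, hj⟩ := exists_nat_pow_near hr1 one_lt_two
    exact Or.inr (mem_iUnion.2 ⟨j, hj⟩)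

lemma lintegral_le_of_le_on_Ico_two_pow (hsupp : ν (Iio 0) = 0) {f : ℝ → ℝ≥0∞} {a : ℝ≥0∞}
    {b : ℕ → ℝ≥0∞} (ha : ∀ r ∈ Ico (0 : ℝ) 1, f r ≤ a)
    (hb : ∀ j : ℕ, ∀ r ∈ Ico ((2 : ℝ) ^ j) (2 ^ (j + 1)), f r ≤ b j) :
    ∫⁻ r, f r ∂ν ≤ a * ν (Ico 0 1) + ∑' j, b j * ν (Ico (2 ^ j) (2 ^ (j + 1))) := by
  have hν : ν.restrict (Ici 0) = ν :=
    Measure.restrict_eq_self_of_ae_mem (mem_ae_iff.2 (by rwa [ofPred_mem_eq, compl_Ici]))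
  calc ∫⁻ r, f r ∂ν = ∫⁻ r in Ici 0, f r ∂ν := by rw [hν]
    _ ≤ ∫⁻ r in Ico 0 1 ∪ ⋃ j : ℕ, Ico (2 ^ j) (2 ^ (j + 1)), f r ∂ν :=
      lintegral_mono_set Ici_zero_subset_Ico_union_iUnion_Ico_two_pow
    _ ≤ ∫⁻ r in Ico 0 1, f r ∂ν + ∑' j : ℕ, ∫⁻ r in Ico (2 ^ j) (2 ^ (j + 1)), f r ∂ν :=
      (lintegral_union_le _ _ _).trans (by gcongr; exact lintegral_iUnion_le _ _)
    _ ≤ ∫⁻ _ in Ico 0 1, a ∂ν + ∑' j : ℕ, ∫⁻ _ in Ico (2 ^ j) (2 ^ (j + 1)), b j ∂ν :=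
      add_le_add (setLIntegral_mono measurable_const ha)
        (ENNReal.tsum_le_tsum fun j ↦ setLIntegral_mono measurable_const (hb j))
    _ = a * ν (Ico 0 1) + ∑' j, b j * ν (Ico (2 ^ j) (2 ^ (j + 1))) := by
      simp only [setLIntegral_const]

lemma lintegral_le_of_doubling (hsupp : ν (Iio 0) = 0)
    (hfin : ∀ r : ℝ, 0 < r → ν (Ico 0 r) ≠ ⊤)
    (hC : ∀ r : ℝ, 0 < r → ν (Ico 0 (2 * r)) ≤ C * ν (Ico 0 r))
    {f : ℝ → ℝ≥0∞} {a b : ℝ≥0∞} (ha : ∀ r ∈ Ico (0 : ℝ) 1, f r ≤ a)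
    (hb : ∀ j : ℕ, ∀ r ∈ Ico ((2 : ℝ) ^ j) (2 ^ (j + 1)), f r ≤ b ^ j) :
    ∫⁻ r, f r ∂ν ≤ ν (Ico 0 1) * (a + (C - 1) * ∑' j : ℕ, (b * C) ^ j) := by
  calc ∫⁻ r, f r ∂ν ≤ a * ν (Ico 0 1) + ∑' j, b ^ j * ν (Ico (2 ^ j) (2 ^ (j + 1))) :=
      lintegral_le_of_le_on_Ico_two_pow hsupp ha hb
    _ ≤ a * ν (Ico 0 1) + ∑' j, b ^ j * ((C - 1) * C ^ j * ν (Ico 0 1)) := by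
      gcongr with j
      exact measure_Ico_two_pow_le hfin hC j
    _ = ν (Ico 0 1) * (a + (C - 1) * ∑' j : ℕ, (b * C) ^ j) := by
      rw [← ENNReal.tsum_mul_left, mul_add, ← ENNReal.tsum_mul_left]
      congr 1
      · ring
      · congr 1 with j
        ring

end Doubling

lemma ENNReal.ofReal_add_mul_tsum_geometric {a c t : ℝ} (ha : 0 ≤ a) (hc : 0 ≤ c)
    (ht₀ : 0 ≤ t) (ht₁ : t < 1) :
    ENNReal.ofReal a + ENNReal.ofReal c * ∑' j : ℕ, ENNReal.ofReal t ^ j =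
      ENNReal.ofReal (a + c * ∑' j : ℕ, t ^ j) := by
  have hS : ∑' j : ℕ, ENNReal.ofReal t ^ j = ENNReal.ofReal (∑' j : ℕ, t ^ j) := by
    simp_rw [← ENNReal.ofReal_pow ht₀]
    exact (ENNReal.ofReal_tsum_of_nonneg (fun j ↦ pow_nonneg ht₀ j)
      (summable_geometric_of_lt_one ht₀ ht₁)).symm
  rw [hS, ← ENNReal.ofReal_mul hc, ← ENNReal.ofReal_add ha]
  exact mul_nonneg hc (tsum_nonneg fun j ↦ pow_nonneg ht₀ j)

lemma Real.add_rpow_neg_le_two_rpow_neg_pow {q r x : ℝ} (hq : 0 ≤ q) (hx : 0 ≤ x) {j : ℕ}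
    (hj : 2 ^ j ≤ r) : (r + x) ^ (-q) ≤ ((2 : ℝ) ^ (-q)) ^ j := by
  rw [Real.rpow_pow_comm zero_le_two]
  exact Real.rpow_le_rpow_of_nonpos (by positivity) (by linarith) (by linarith)

theorem stmt_1_general (ν : Measure ℝ) (hsupp : ν (Iio (0 : ℝ)) = 0)
    (hfin : ∀ r : ℝ, 0 < r → ν (Ico (0 : ℝ) r) ≠ ⊤)
    (R : ℝ) (hR : ∀ r : ℝ, 0 < r →
      ν (Ico (0 : ℝ) (2 * r)) ≤ ENNReal.ofReal R * ν (Ico (0 : ℝ) r))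
    (q : ℝ) (hq : 0 < q) (hqR : R < 2 ^ q)
    (x : ℝ) (hx : 0 < x)
    (g : ℝ → ℝ)
    (hg1 : ∀ r : ℝ, 0 ≤ r → r < 1 → g r = x ^ (-q))
    (hg2 : ∀ j : ℕ, ∀ r : ℝ, (2 : ℝ) ^ j ≤ r → r < 2 ^ (j + 1) →
      g r = ((2 : ℝ) ^ j + x) ^ (-q)) :
    (∫⁻ r, ENNReal.ofReal (g r) ∂ν ≤
        ν (Ico (0 : ℝ) 1) *
          ENNReal.ofReal (x ^ (-q) + (R - 1) * ∑' j : ℕ, (R / 2 ^ q) ^ j)) ∧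
      ∫⁻ r, ENNReal.ofReal ((r + x) ^ (-q)) ∂ν < ⊤ := by
  have hbound : ∀ f : ℝ → ℝ≥0∞, (∀ r ∈ Ico (0 : ℝ) 1, f r ≤ ENNReal.ofReal (x ^ (-q))) →
      (∀ j : ℕ, ∀ r ∈ Ico ((2 : ℝ) ^ j) (2 ^ (j + 1)), f r ≤ ENNReal.ofReal (2 ^ (-q)) ^ j) →
      ∫⁻ r, f r ∂ν ≤ ν (Ico 0 1) * ENNReal.ofReal (x ^ (-q) + (R - 1) * ∑' j : ℕ, (R / 2 ^ q) ^ j) := by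
    intro f ha hb
    refine (lintegral_le_of_doubling hsupp hfin hR ha hb).trans ?_
    rcases eq_or_ne (ν (Ico 0 1)) 0 with hA | hA
    · simp [hA]
    have hR1 : 1 ≤ R := ENNReal.one_le_ofReal.mp <|
      one_le_of_measure_Ico_two_le hA (hfin 1 one_pos) (by simpa using hR 1 one_pos)
    have hratio : ENNReal.ofReal (2 ^ (-q)) * ENNReal.ofReal R = ENNReal.ofReal (R / 2 ^ q) := by
      rw [← ENNReal.ofReal_mul (by positivity), Real.rpow_neg zero_le_two, inv_mul_eq_div]
    have h2q : (0 : ℝ) < 2 ^ q := by positivity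
    rw [hratio, ← ENNReal.ofReal_one, ← ENNReal.ofReal_sub _ zero_le_one,
      ENNReal.ofReal_add_mul_tsum_geometric (by positivity) (by linarith) (by positivity)
        ((div_lt_one h2q).2 hqR)]
  refine ⟨hbound _ ?_ ?_, (hbound _ ?_ ?_).trans_lt
    (ENNReal.mul_lt_top (hfin 1 one_pos).lt_top ENNReal.ofReal_lt_top)⟩
  · rintro r ⟨hr₀, hr₁⟩
    rw [hg1 r hr₀ hr₁]
  · rintro j r ⟨hj, hj'⟩
    rw [hg2 j r hj hj', ← ENNReal.ofReal_pow (by positivity)]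
    exact ENNReal.ofReal_le_ofReal (Real.add_rpow_neg_le_two_rpow_neg_pow hq.le hx.le le_rfl)
  · rintro r ⟨hr₀, -⟩
    exact ENNReal.ofReal_le_ofReal (Real.rpow_le_rpow_of_nonpos hx (by linarith) (by linarith))
  · rintro j r ⟨hj, -⟩
    rw [← ENNReal.ofReal_pow (by positivity)]
    exact ENNReal.ofReal_le_ofReal (Real.add_rpow_neg_le_two_rpow_neg_pow hq.le hx.le hj)

/-- Let `ν` be a positive regular Borel measure on `[0,∞)` satisfying the Δ₂-condition with
constant `R`, and let `q > 0` satisfy `2 ^ q > R`.  Then for every `x > 0` the integral of the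
step function `g` (equal to `x⁻ᑫ` on `[0,1)` and to `(2^j + x)⁻ᑫ` on `[2^j, 2^(j+1))`)
against `ν` is finite, with the bound `ν[0,1) * (x⁻ᑫ + (R-1) * ∑ (R/2^q)^j)`; in particular
`∫ (r + x)⁻ᑫ dν(r) < ∞`. -/
theorem stmt_1 (ν : Measure ℝ) [ν.Regular] (hsupp : ν (Iio (0 : ℝ)) = 0)
    (hfin : ∀ r : ℝ, 0 < r → ν (Ico (0 : ℝ) r) ≠ ⊤)
    (R : ℝ) (hR : ∀ r : ℝ, 0 < r →
      ν (Ico (0 : ℝ) (2 * r)) ≤ ENNReal.ofReal R * ν (Ico (0 : ℝ) r))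
    (q : ℝ) (hq : 0 < q) (hqR : R < 2 ^ q)
    (x : ℝ) (hx : 0 < x)
    (g : ℝ → ℝ)
    (hg1 : ∀ r : ℝ, 0 ≤ r → r < 1 → g r = x ^ (-q))
    (hg2 : ∀ j : ℕ, ∀ r : ℝ, (2 : ℝ) ^ j ≤ r → r < 2 ^ (j + 1) →
      g r = ((2 : ℝ) ^ j + x) ^ (-q)) :
    (∫⁻ r, ENNReal.ofReal (g r) ∂ν ≤
        ν (Ico (0 : ℝ) 1) *
          ENNReal.ofReal (x ^ (-q) + (R - 1) * ∑' j : ℕ, (R / 2 ^ q) ^ j)) ∧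
      ∫⁻ r, ENNReal.ofReal ((r + x) ^ (-q)) ∂ν < ⊤ :=
  stmt_1_general ν hsupp hfin R hR q hq hqR x hx g hg1 hg2
end

section
/- Let α ∈ ℂ₊ and let μ be a Carleson measure for the Dirichlet space 𝒟(ℂ₊) with constant C(μ). Then μ(Q(a)) ≤ 2 C'(Re(a) + 2) for all a ∈ ℂ₊ and some constant C' depending only on μ; i.e., μ(Q(a)) = O(Re(a) + 1). -/
/-!
Test the Carleson inequality against `f(t) = exp(-ā t)`, whose Laplace transform is
`1 / (z + ā)`. Its squared Dirichlet norm is `1/(2 Re a) + 1/(2 Re a)²`, while on `Q(a)` we have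
`|z + ā|² ≤ 10 (Re a)²`, so `μ(Q(a)) / (10 (Re a)²) ≤ C (1/(2 Re a) + 1/(2 Re a)²)`,
i.e. `μ(Q(a)) ≤ 5 C Re a + 5 C / 2`.
-/

open MeasureTheory Set
open scoped ENNReal

noncomputable def laplace (f : ℝ → ℂ) (z : ℂ) : ℂ :=
  ∫ t in Ioi (0 : ℝ), f t * Complex.exp (-z * t)

/-- The Carleson square centred at `a ∈ ℂ₊`. -/
def carlesonSquare (a : ℂ) : Set ℂ :=
  {z : ℂ | 0 < z.re ∧ z.re ≤ 2 * a.re ∧ |z.im - a.im| ≤ a.re}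

open scoped ComplexConjugate

lemma integrableOn_one_add_mul_exp_neg_mul_Ioi {r : ℝ} (hr : 0 < r) :
    IntegrableOn (fun t : ℝ => (1 + t) * Real.exp (-(r * t))) (Ioi 0) := by
  have h0 := integrableOn_rpow_mul_exp_neg_mul_rpow (s := 0) (by norm_num) one_pos hr
  have h1 := integrableOn_rpow_mul_exp_neg_mul_rpow (s := 1) (by norm_num) one_pos hr
  refine (h0.add h1).congr_fun (fun t _ => ?_) measurableSet_Ioi
  simp only [Pi.add_apply, Real.rpow_zero, Real.rpow_one, neg_mul]
  ring

lemma integral_one_add_mul_exp_neg_mul_Ioi {r : ℝ} (hr : 0 < r) :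
    ∫ t in Ioi (0 : ℝ), (1 + t) * Real.exp (-(r * t)) = 1 / r + 1 / r ^ 2 := by
  have h1 := Real.integral_rpow_mul_exp_neg_mul_Ioi one_pos hr
  have h2 := Real.integral_rpow_mul_exp_neg_mul_Ioi two_pos hr
  norm_num [Real.Gamma_two] at h1 h2
  have hi1 : IntegrableOn (fun t : ℝ => Real.exp (-(r * t))) (Ioi 0) := by
    simpa only [neg_mul] using exp_neg_integrableOn_Ioi 0 hr
  have hi2 : IntegrableOn (fun t : ℝ => t * Real.exp (-(r * t))) (Ioi 0) := by
    simpa using integrableOn_rpow_mul_exp_neg_mul_rpow (s := 1) (by norm_num) one_pos hr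
  simp_rw [add_mul, one_mul]
  rw [integral_add hi1 hi2, h1, h2]
  ring

lemma laplace_cexp_neg_mul {b z : ℂ} (h : 0 < (z + b).re) :
    laplace (fun t => Complex.exp (-b * t)) z = 1 / (z + b) := by
  have hexp : ∀ t : ℝ, Complex.exp (-b * t) * Complex.exp (-z * t)
      = Complex.exp (-(z + b) * t) := fun t => by
    rw [← Complex.exp_add]
    ring_nf
  simp only [laplace, hexp]
  rw [integral_exp_mul_complex_Ioi (by rwa [Complex.neg_re, neg_lt_zero]), Complex.ofReal_zero,
    mul_zero, Complex.exp_zero, div_neg, neg_div, neg_neg]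

lemma norm_cexp_neg_mul_sq_mul_one_add (b : ℂ) (t : ℝ) :
    ‖Complex.exp (-b * t)‖ ^ 2 * (1 + t) = (1 + t) * Real.exp (-(2 * b.re * t)) := by
  rw [Complex.norm_exp, ← Real.exp_nat_mul]
  simp only [Complex.mul_re, Complex.neg_re, Complex.ofReal_re, Complex.neg_im,
    Complex.ofReal_im, mul_zero, sub_zero]
  push_cast
  ring_nf

lemma integrableOn_norm_cexp_neg_mul_sq_mul_one_add {b : ℂ} (hb : 0 < b.re) :
    IntegrableOn (fun t : ℝ => ‖Complex.exp (-b * t)‖ ^ 2 * (1 + t)) (Ioi 0) := by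
  simpa only [norm_cexp_neg_mul_sq_mul_one_add]
    using integrableOn_one_add_mul_exp_neg_mul_Ioi (by positivity : 0 < 2 * b.re)

lemma integral_norm_cexp_neg_mul_sq_mul_one_add {b : ℂ} (hb : 0 < b.re) :
    ∫ t in Ioi (0 : ℝ), ‖Complex.exp (-b * t)‖ ^ 2 * (1 + t)
      = 1 / (2 * b.re) + 1 / (2 * b.re) ^ 2 := by
  simpa only [norm_cexp_neg_mul_sq_mul_one_add]
    using integral_one_add_mul_exp_neg_mul_Ioi (by positivity : 0 < 2 * b.re)

lemma measurableSet_carlesonSquare (a : ℂ) : MeasurableSet (carlesonSquare a) :=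
  (measurableSet_lt measurable_const Complex.measurable_re).inter
    ((measurableSet_le Complex.measurable_re measurable_const).inter
      (measurableSet_le (Complex.measurable_im.sub measurable_const).abs measurable_const))

lemma norm_add_conj_sq_le_of_mem_carlesonSquare {a z : ℂ} (hz : z ∈ carlesonSquare a) :
    ‖z + conj a‖ ^ 2 ≤ 10 * a.re ^ 2 := by
  obtain ⟨hre_pos, hre_le, him⟩ := hz
  obtain ⟨him_lower, him_upper⟩ := abs_le.mp him
  rw [Complex.sq_norm, Complex.normSq_apply, Complex.add_re, Complex.add_im, Complex.conj_re,
    Complex.conj_im]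
  nlinarith

lemma inv_le_norm_laplace_sq_of_mem_carlesonSquare {a z : ℂ} (ha : 0 < a.re)
    (hz : z ∈ carlesonSquare a) :
    1 / (10 * a.re ^ 2) ≤ ‖laplace (fun t => Complex.exp (-conj a * t)) z‖ ^ 2 := by
  have hre : 0 < (z + conj a).re := by
    rw [Complex.add_re, Complex.conj_re]
    linarith [hz.1]
  have hne : z + conj a ≠ 0 := fun h => by simp [h] at hre
  rw [laplace_cexp_neg_mul hre, norm_div, norm_one, div_pow, one_pow]
  exact one_div_le_one_div_of_le (by positivity) (norm_add_conj_sq_le_of_mem_carlesonSquare hz)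

lemma setLIntegral_ge_of_const_le {α : Type*} [MeasurableSpace α] {μ : Measure α} {s : Set α}
    {g : α → ℝ≥0∞} {c : ℝ≥0∞} (hs : MeasurableSet s) (hg : ∀ x ∈ s, c ≤ g x) :
    c * μ s ≤ ∫⁻ x in s, g x ∂μ := by
  rw [← setLIntegral_const]
  exact setLIntegral_mono' hs hg

def IsDirichletCarlesonMeasure (μ : Measure ℂ) (C : ℝ) : Prop :=
  ∀ f : ℝ → ℂ, AEStronglyMeasurable f (volume.restrict (Ioi (0 : ℝ))) →
    IntegrableOn (fun t => ‖f t‖ ^ 2 * (1 + t)) (Ioi (0 : ℝ)) volume →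
    ∫⁻ z in {z : ℂ | 0 < z.re}, ‖laplace f z‖₊ ^ 2 ∂μ ≤
      ENNReal.ofReal (C * ∫ t in Ioi (0 : ℝ), ‖f t‖ ^ 2 * (1 + t))

theorem IsDirichletCarlesonMeasure.measure_carlesonSquare_le {μ : Measure ℂ} {C : ℝ}
    (hμ : IsDirichletCarlesonMeasure μ C) {a : ℂ} (ha : 0 < a.re) :
    μ (carlesonSquare a) ≤ ENNReal.ofReal (5 * C * a.re + 5 * C / 2) := by
  set f : ℝ → ℂ := fun t => Complex.exp (-conj a * t)
  have hconj : 0 < (conj a).re := by rwa [Complex.conj_re]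
  have hf_meas : AEStronglyMeasurable f (volume.restrict (Ioi (0 : ℝ))) :=
    (by fun_prop : Continuous f).aestronglyMeasurable
  have hlow : ∀ z ∈ carlesonSquare a,
      ENNReal.ofReal (1 / (10 * a.re ^ 2)) ≤ ‖laplace f z‖₊ ^ 2 := fun z hz => by
    rw [← enorm_eq_nnnorm, ← ofReal_norm, ← ENNReal.ofReal_pow (norm_nonneg _)]
    exact ENNReal.ofReal_le_ofReal (inv_le_norm_laplace_sq_of_mem_carlesonSquare ha hz)
  have hc : 0 < 1 / (10 * a.re ^ 2) := by positivity
  have key : ENNReal.ofReal (1 / (10 * a.re ^ 2)) * μ (carlesonSquare a)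
      ≤ ENNReal.ofReal (C * (1 / (2 * a.re) + 1 / (2 * a.re) ^ 2)) :=
    calc ENNReal.ofReal (1 / (10 * a.re ^ 2)) * μ (carlesonSquare a)
        ≤ ∫⁻ z in carlesonSquare a, ‖laplace f z‖₊ ^ 2 ∂μ :=
          setLIntegral_ge_of_const_le (measurableSet_carlesonSquare a) hlow
      _ ≤ ∫⁻ z in {z : ℂ | 0 < z.re}, ‖laplace f z‖₊ ^ 2 ∂μ :=
          lintegral_mono_set fun z hz => hz.1
      _ ≤ ENNReal.ofReal (C * ∫ t in Ioi (0 : ℝ), ‖f t‖ ^ 2 * (1 + t)) :=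
          hμ f hf_meas (integrableOn_norm_cexp_neg_mul_sq_mul_one_add hconj)
      _ = ENNReal.ofReal (C * (1 / (2 * a.re) + 1 / (2 * a.re) ^ 2)) := by
          rw [integral_norm_cexp_neg_mul_sq_mul_one_add hconj, Complex.conj_re]
  rw [mul_comm, ← ENNReal.le_div_iff_mul_le (Or.inl (ENNReal.ofReal_pos.mpr hc).ne')
    (Or.inl ENNReal.ofReal_ne_top), ← ENNReal.ofReal_div_of_pos hc] at key
  convert key using 2
  field_simp
  ring

theorem stmt_11_general (μ : Measure ℂ)
    (C : ℝ) (hC : 0 < C)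
    (hCarleson : ∀ f : ℝ → ℂ,
      AEStronglyMeasurable f (volume.restrict (Ioi (0 : ℝ))) →
      IntegrableOn (fun t => ‖f t‖ ^ 2 * (1 + t)) (Ioi (0 : ℝ)) volume →
      ∫⁻ z in {z : ℂ | 0 < z.re}, ‖laplace f z‖₊ ^ 2 ∂μ ≤
        ENNReal.ofReal (C * ∫ t in Ioi (0 : ℝ), ‖f t‖ ^ 2 * (1 + t))) :
    ∃ C' : ℝ, 0 < C' ∧ ∀ a : ℂ, 0 < a.re →
      μ (carlesonSquare a) ≤ ENNReal.ofReal (2 * C' * (a.re + 2)) := by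
  refine ⟨5 * C / 2, by positivity, fun a ha => ?_⟩
  refine (IsDirichletCarlesonMeasure.measure_carlesonSquare_le hCarleson ha).trans ?_
  exact ENNReal.ofReal_le_ofReal (by nlinarith)

/-- If `μ` is a Carleson measure for the Dirichlet space
`𝒟(ℂ₊) = 𝔏(L²_{1+t}(0,∞))`, then `μ(Q(a)) ≤ 2 C' (Re a + 2)` for all `a ∈ ℂ₊` and some
constant `C' > 0` depending only on `μ`; i.e. `μ(Q(a)) = O(Re a + 1)`. -/
theorem stmt_11 (μ : Measure ℂ) (hμ : μ {z : ℂ | ¬ 0 < z.re} = 0)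
    (C : ℝ) (hC : 0 < C)
    (hCarleson : ∀ f : ℝ → ℂ,
      AEStronglyMeasurable f (volume.restrict (Ioi (0 : ℝ))) →
      IntegrableOn (fun t => ‖f t‖ ^ 2 * (1 + t)) (Ioi (0 : ℝ)) volume →
      ∫⁻ z in {z : ℂ | 0 < z.re}, ‖laplace f z‖₊ ^ 2 ∂μ ≤
        ENNReal.ofReal (C * ∫ t in Ioi (0 : ℝ), ‖f t‖ ^ 2 * (1 + t))) :
    ∃ C' : ℝ, 0 < C' ∧ ∀ a : ℂ, 0 < a.re →
      μ (carlesonSquare a) ≤ ENNReal.ofReal (2 * C' * (a.re + 2)) :=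
  stmt_11_general μ C hC hCarleson
end
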